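/- arXiv:2410.17392 — 2 statements merged into one kernel-verified Lean document; each statement's English description precedes it below -/
import Mathlib

section
/- For m ≥ 5, the normalized moment matrix of the full design of all Hamiltonian circuits equals (2/(m-1))·I + (2/((m-1)(m-2)))·Q. Precisely: let p = C(m,2) and let x_{jk}(a) ∈ {0,1} indicate whether edge (j,k) lies in circuit a. Then (2/(m-1)!) · Σ_{a} x(a) x(a)^T, where the sum runs over all (m-1)!/2 Hamiltonian circuits a on K_m, equals the p×p matrix with diagonal entries 2/(m-1), entries 2/((m-1)(m-2)) for pairs of edges sharing exactly one vertex, and entries 4/((m-1)(m-2)) for pairs of vertex-disjoint edges. -/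
open Finset

/-- The undirected edges of the complete graph `K_m` (unordered pairs of distinct vertices). -/
abbrev Edge (m : ℕ) := {e : Sym2 (Fin m) // ¬ e.IsDiag}

/-- The edge set of the Hamiltonian circuit visiting the vertices in the order
`f 0, f 1, …, f (m-1)` and returning to `f 0`.  Since the edge set of a cycle is invariant
under cyclic rotation and reversal of the vertex sequence (and determines the cycle up to
these symmetries), edge sets faithfully represent Hamiltonian circuits up to rotation and
reversal. -/
def circuitEdges (m : ℕ) (f : Equiv.Perm (Fin m)) : Finset (Sym2 (Fin m)) :=
  Finset.image (fun i => s(f i, f (finRotate m i))) Finset.univ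

/-- The set of all Hamiltonian circuits of `K_m`, identified up to rotation and reversal,
represented by their edge sets. -/
def HamCircuits (m : ℕ) : Finset (Finset (Sym2 (Fin m))) :=
  Finset.image (circuitEdges m) Finset.univ


/-- The edge-indicator vector of a circuit. -/
def xvec (m : ℕ) (a : Finset (Sym2 (Fin m))) : Edge m → ℝ :=
  fun e => if e.val ∈ a then 1 else 0


/-- Outer product `x(a) x(a)ᵀ`. -/
def outerMat (m : ℕ) (a : Finset (Sym2 (Fin m))) : Matrix (Edge m) (Edge m) ℝ :=
  Matrix.of fun e e' => xvec m a e * xvec m a e'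

/-- Moment matrix of the uniform measure over all Hamiltonian circuits:
`M_f = (2/(m-1)!) Σ_a x(a) x(a)ᵀ`. -/
noncomputable def fullMoment (m : ℕ) : Matrix (Edge m) (Edge m) ℝ :=
  (2 / ((m - 1).factorial : ℝ)) • ∑ a ∈ HamCircuits m, outerMat m a


section PermAux
variable {α : Type*} [DecidableEq α]
open Equiv

/-- extend: given a perm `g` and points `x x'`, modify `g` so that `x ↦ x'`,
keeping values `g y` for `y` with `g y ∉ {g x, x'}`. -/
lemma perm_step (g : Equiv.Perm α) (x x' : α) :
    ∃ h : Equiv.Perm α, h x = x' ∧ ∀ y, g y ≠ g x → g y ≠ x' → h y = g y := by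
  refine ⟨(Equiv.swap (g x) x') * g, ?_, ?_⟩
  · simp [Equiv.swap_apply_left]
  · intro y h1 h2
    simp [Equiv.Perm.mul_apply, Equiv.swap_apply_of_ne_of_ne h1 h2]

lemma exists_perm2 {a b a' b' : α} (hab : a ≠ b) (hab' : a' ≠ b') :
    ∃ g : Equiv.Perm α, g a = a' ∧ g b = b' := by
  obtain ⟨g1, hg1, -⟩ := perm_step (1 : Equiv.Perm α) a a'
  obtain ⟨g2, hg2, hg2'⟩ := perm_step g1 b b'
  refine ⟨g2, ?_, hg2⟩
  rw [hg2' a (fun h => hab (g1.injective h)) (by rw [hg1]; exact hab'), hg1]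

lemma exists_perm3 {a b c a' b' c' : α} (hab : a ≠ b) (hac : a ≠ c) (hbc : b ≠ c)
    (hab' : a' ≠ b') (hac' : a' ≠ c') (hbc' : b' ≠ c') :
    ∃ g : Equiv.Perm α, g a = a' ∧ g b = b' ∧ g c = c' := by
  obtain ⟨g1, hg1a, hg1b⟩ := exists_perm2 hab hab'
  obtain ⟨g2, hg2, hg2'⟩ := perm_step g1 c c'
  refine ⟨g2, ?_, ?_, hg2⟩
  · rw [hg2' a (fun h => hac (g1.injective h)) (by rw [hg1a]; exact hac'), hg1a]
  · rw [hg2' b (fun h => hbc (g1.injective h)) (by rw [hg1b]; exact hbc'), hg1b]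

lemma exists_perm4 {a b c d a' b' c' d' : α} (hab : a ≠ b) (hac : a ≠ c) (had : a ≠ d)
    (hbc : b ≠ c) (hbd : b ≠ d) (hcd : c ≠ d)
    (hab' : a' ≠ b') (hac' : a' ≠ c') (had' : a' ≠ d')
    (hbc' : b' ≠ c') (hbd' : b' ≠ d') (hcd' : c' ≠ d') :
    ∃ g : Equiv.Perm α, g a = a' ∧ g b = b' ∧ g c = c' ∧ g d = d' := by
  obtain ⟨g1, hg1a, hg1b, hg1c⟩ := exists_perm3 hab hac hbc hab' hac' hbc'
  obtain ⟨g2, hg2, hg2'⟩ := perm_step g1 d d'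
  refine ⟨g2, ?_, ?_, ?_, hg2⟩
  · rw [hg2' a (fun h => had (g1.injective h)) (by rw [hg1a]; exact had'), hg1a]
  · rw [hg2' b (fun h => hbd (g1.injective h)) (by rw [hg1b]; exact hbd'), hg1b]
  · rw [hg2' c (fun h => hcd (g1.injective h)) (by rw [hg1c]; exact hcd'), hg1c]

end PermAux


section HamAux
variable {n : ℕ}
open Fin.CommRing

lemma fin_one_ne_zero (hn : 1 ≤ n) : (1 : Fin (n+1)) ≠ 0 := by
  rw [Ne, Fin.ext_iff, Fin.val_one' (n+1), Fin.val_zero, Nat.mod_eq_of_lt (by omega)]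
  omega
lemma fin_two_ne_zero (hn : 2 ≤ n) : (1 : Fin (n+1)) + 1 ≠ 0 := by
  have h1 : (1 : Fin (n+1)).val = 1 := by
    rw [Fin.val_one' (n+1), Nat.mod_eq_of_lt (by omega)]
  rw [Ne, Fin.ext_iff, Fin.val_add, h1, Fin.val_zero, Nat.mod_eq_of_lt (by omega)]
  omega
lemma fin_add_two_ne (hn : 2 ≤ n) (i : Fin (n+1)) : i + 1 + 1 ≠ i := by
  intro h
  have : i + (1 + 1) = i + 0 := by rw [← add_assoc, h, add_zero]
  exact fin_two_ne_zero hn (add_left_cancel this)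
lemma fin_add_one_ne (hn : 1 ≤ n) (i : Fin (n+1)) : i + 1 ≠ i := by
  intro h
  have : i + 1 = i + 0 := by rw [h, add_zero]
  exact fin_one_ne_zero hn (add_left_cancel this)

lemma mem_circuitEdges (f : Equiv.Perm (Fin (n+1))) (e : Sym2 (Fin (n+1))) :
    e ∈ circuitEdges (n+1) f ↔ ∃ i, s(f i, f (i+1)) = e := by
  simp [circuitEdges]

lemma circuitEdges_mul (g f : Equiv.Perm (Fin (n+1))) :
    circuitEdges (n+1) (g * f) = (circuitEdges (n+1) f).image (Sym2.map g) := by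
  unfold circuitEdges
  rw [Finset.image_image]
  rfl

lemma step_chain (hn : 2 ≤ n) (g : Equiv.Perm (Fin (n+1))) (d : Fin (n+1))
    (hg : ∀ i, g (i+1) = g i + 1 ∨ g (i+1) = g i - 1)
    (hd : d = 1 ∨ d = -1)
    (h0 : g 1 = g 0 + d) : ∀ i, g i = g 0 + d * i := by
  have key : ∀ t : ℕ, g ((t : Fin (n+1)) + 1) = g (t : Fin (n+1)) + d := by
    intro t
    induction t with
    | zero => simpa using h0
    | succ t ih =>
      have hc : ((t+1 : ℕ) : Fin (n+1)) = (t : Fin (n+1)) + 1 := by push_cast; ring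
      rw [hc]
      rcases hg ((t : Fin (n+1)) + 1) with h | h
      · -- g(i+1) = g i + 1
        rcases hd with rfl | rfl
        · exact h
        · -- d = -1 : then g(i+1) = g i + 1 = (g t - 1) + 1 = g t, contradiction
          exfalso
          rw [ih] at h
          have : g ((t : Fin (n+1)) + 1 + 1) = g (t : Fin (n+1)) := by
            rw [h]; ring_nf
          have h2 := g.injective this
          exact fin_add_two_ne hn _ h2
      · rcases hd with rfl | rfl
        · exfalso
          rw [ih] at h
          have : g ((t : Fin (n+1)) + 1 + 1) = g (t : Fin (n+1)) := by
            rw [h]; ring_nf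
          exact fin_add_two_ne hn _ (g.injective this)
        · rw [h, ih]; ring
  have key2 : ∀ t : ℕ, g (t : Fin (n+1)) = g 0 + d * (t : Fin (n+1)) := by
    intro t
    induction t with
    | zero => simp
    | succ t ih =>
      have hc : ((t+1 : ℕ) : Fin (n+1)) = (t : Fin (n+1)) + 1 := by push_cast; ring
      rw [hc, key t, ih]; ring
  intro i
  have := key2 i.val
  rwa [Fin.cast_val_eq_self] at this

lemma mem_D_iff (hn : 2 ≤ n) (g : Equiv.Perm (Fin (n+1))) :
    circuitEdges (n+1) g = circuitEdges (n+1) 1 ↔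
      ((∀ i, g i = g 0 + i) ∨ (∀ i, g i = g 0 - i)) := by
  constructor
  · intro h
    have hg : ∀ i : Fin (n+1), g (i+1) = g i + 1 ∨ g (i+1) = g i - 1 := by
      intro i
      have hm : s(g i, g (i+1)) ∈ circuitEdges (n+1) 1 := by
        rw [← h, mem_circuitEdges]; exact ⟨i, rfl⟩
      rw [mem_circuitEdges] at hm
      obtain ⟨j, hj⟩ := hm
      simp only [Equiv.Perm.coe_one, id_eq] at hj
      rw [Sym2.eq_iff] at hj
      rcases hj with ⟨h1, h2⟩ | ⟨h1, h2⟩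
      · left; rw [← h2, h1]
      · right; rw [← h1, ← h2]; ring
    have h0 := hg 0
    rw [zero_add] at h0
    rcases h0 with h0 | h0
    · left
      have := step_chain hn g 1 hg (Or.inl rfl) h0
      intro i; rw [this i, one_mul]
    · right
      have := step_chain hn g (-1) hg (Or.inr rfl) (by rw [h0]; ring)
      intro i; rw [this i]; ring
  · intro h
    rcases h with h | h
    · ext e
      rw [mem_circuitEdges, mem_circuitEdges]
      simp only [Equiv.Perm.coe_one, id_eq]
      constructor
      · rintro ⟨i, rfl⟩
        exact ⟨g 0 + i, by rw [h i, h (i+1)]; congr 1; ring⟩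
      · rintro ⟨j, rfl⟩
        exact ⟨j - g 0, by rw [h (j - g 0), h (j - g 0 + 1)]; congr 1 <;> ring⟩
    · ext e
      rw [mem_circuitEdges, mem_circuitEdges]
      simp only [Equiv.Perm.coe_one, id_eq]
      constructor
      · rintro ⟨i, rfl⟩
        refine ⟨g 0 - (i + 1), ?_⟩
        rw [h i, h (i+1), Sym2.eq_swap]
        congr 1; ring
      · rintro ⟨j, rfl⟩
        refine ⟨g 0 - (j + 1), ?_⟩
        rw [h (g 0 - (j+1)), h (g 0 - (j+1) + 1), Sym2.eq_swap]
        congr 1 <;> ring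

lemma not_isDiag_of_mem (hn : 1 ≤ n) {f : Equiv.Perm (Fin (n+1))} {e : Sym2 (Fin (n+1))}
    (he : e ∈ circuitEdges (n+1) f) : ¬ e.IsDiag := by
  rw [mem_circuitEdges] at he
  obtain ⟨i, rfl⟩ := he
  rw [Sym2.mk_isDiag_iff]
  intro h
  exact fin_add_one_ne hn i (f.injective h.symm)

/-- the dihedral map -/
def dih (p : Fin (n+1) × Bool) : Equiv.Perm (Fin (n+1)) :=
  if p.2 then Equiv.addLeft p.1 else Equiv.subLeft p.1

lemma card_fiber_one (hn : 2 ≤ n) :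
    #(Finset.univ.filter fun g : Equiv.Perm (Fin (n+1)) =>
        circuitEdges (n+1) g = circuitEdges (n+1) 1) = 2 * (n+1) := by
  have himg : (Finset.univ.filter fun g : Equiv.Perm (Fin (n+1)) =>
      circuitEdges (n+1) g = circuitEdges (n+1) 1) = Finset.univ.image dih := by
    ext g
    simp only [mem_filter, mem_univ, true_and, mem_image]
    rw [mem_D_iff hn]
    constructor
    · rintro (h | h)
      · exact ⟨(g 0, true), by
          ext i; simp only [dih, if_pos]; rw [Equiv.coe_addLeft, h i]⟩
      · exact ⟨(g 0, false), by
          ext i; simp only [dih, if_neg Bool.false_ne_true]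
          rw [Equiv.subLeft_apply, h i]⟩
    · rintro ⟨⟨a, b⟩, rfl⟩
      cases b
      · right; intro i
        simp [dih, Equiv.subLeft_apply]
      · left; intro i
        simp [dih, Equiv.coe_addLeft]
  rw [himg, Finset.card_image_of_injective _ ?_, card_univ]
  · simp [mul_comm]
  · rintro ⟨a, b⟩ ⟨c, d⟩ h
    have h0 : dih (a,b) 0 = dih (c,d) 0 := by rw [h]
    have h1 : dih (a,b) 1 = dih (c,d) 1 := by rw [h]
    cases b <;> cases d <;>
      simp only [dih, if_pos, if_neg Bool.false_ne_true, Equiv.coe_addLeft,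
        Equiv.subLeft_apply, add_zero, sub_zero] at h0 h1
    · subst h0; rfl
    · exfalso; subst h0
      -- a - 1 = a + 1
      have : a + 1 + 1 = a := by rw [← h1]; ring
      exact fin_add_two_ne hn a this
    · exfalso; subst h0
      have : a + 1 + 1 = a := by rw [h1]; ring
      exact fin_add_two_ne hn a this
    · subst h0; rfl

lemma card_fiber (hn : 2 ≤ n) (f : Equiv.Perm (Fin (n+1))) :
    #(Finset.univ.filter fun g : Equiv.Perm (Fin (n+1)) =>
        circuitEdges (n+1) g = circuitEdges (n+1) f) = 2 * (n+1) := by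
  rw [← card_fiber_one hn]
  apply Finset.card_bij (fun g _ => f⁻¹ * g)
  · intro g hg
    simp only [mem_filter, mem_univ, true_and] at hg ⊢
    rw [circuitEdges_mul, hg, ← circuitEdges_mul]
    simp
  · intro g₁ h₁ g₂ h₂ h
    exact mul_left_cancel h
  · intro k hk
    refine ⟨f * k, ?_, by group⟩
    simp only [mem_filter, mem_univ, true_and] at hk ⊢
    rw [circuitEdges_mul, hk, ← circuitEdges_mul, mul_one]

/-- the number of permutations whose circuit contains both `e` and `e'`. -/
def cnt (n : ℕ) (e e' : Sym2 (Fin (n+1))) : ℕ :=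
  #(Finset.univ.filter fun f : Equiv.Perm (Fin (n+1)) =>
      e ∈ circuitEdges (n+1) f ∧ e' ∈ circuitEdges (n+1) f)

lemma mem_image_sym2 (g : Equiv.Perm (Fin (n+1))) (s : Finset (Sym2 (Fin (n+1))))
    (e : Sym2 (Fin (n+1))) : Sym2.map g e ∈ s.image (Sym2.map g) ↔ e ∈ s := by
  constructor
  · intro h
    obtain ⟨a, ha, hae⟩ := Finset.mem_image.mp h
    rwa [← Sym2.map.injective g.injective hae]
  · exact fun h => Finset.mem_image_of_mem _ h

lemma mem_circuit_map (g f : Equiv.Perm (Fin (n+1))) (e : Sym2 (Fin (n+1))) :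
    Sym2.map g e ∈ circuitEdges (n+1) (g * f) ↔ e ∈ circuitEdges (n+1) f := by
  rw [circuitEdges_mul, mem_image_sym2]

lemma cnt_map (g : Equiv.Perm (Fin (n+1))) (e e' : Sym2 (Fin (n+1))) :
    cnt n (Sym2.map g e) (Sym2.map g e') = cnt n e e' := by
  unfold cnt
  apply Finset.card_bij (fun f _ => g⁻¹ * f)
  · intro f hf
    simp only [mem_filter, mem_univ, true_and] at hf ⊢
    have h1 := mem_circuit_map g (g⁻¹ * f) e
    rw [← mul_assoc, mul_inv_cancel, one_mul] at h1
    have h2 := mem_circuit_map g (g⁻¹ * f) e'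
    rw [← mul_assoc, mul_inv_cancel, one_mul] at h2
    exact ⟨h1.mp hf.1, h2.mp hf.2⟩
  · intro f₁ h₁ f₂ h₂ h
    exact mul_left_cancel h
  · intro f hf
    refine ⟨g * f, ?_, by group⟩
    simp only [mem_filter, mem_univ, true_and] at hf ⊢
    rw [mem_circuit_map, mem_circuit_map]
    exact hf

lemma degree_two (hn : 2 ≤ n) (f : Equiv.Perm (Fin (n+1))) (u : Fin (n+1)) :
    #((circuitEdges (n+1) f).filter fun e => u ∈ e) = 2 := by
  set j := f.symm u with hjdef
  have hj : f j = u := f.apply_symm_apply u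
  have hset : (circuitEdges (n+1) f).filter (fun e => u ∈ e) =
      {s(f j, f (j+1)), s(f (j-1), f j)} := by
    ext e
    rw [mem_filter, mem_circuitEdges, mem_insert, mem_singleton]
    constructor
    · rintro ⟨⟨i, rfl⟩, hu⟩
      rw [Sym2.mem_iff] at hu
      rcases hu with hu | hu
      · left
        have : i = j := f.injective (by rw [hj, hu])
        rw [this]
      · right
        have hij : i + 1 = j := f.injective (by rw [hj, hu])
        have : i = j - 1 := by rw [← hij]; ring
        have h4 : j - 1 + 1 = j := by ring
        rw [this, h4]
    · rintro (rfl | rfl)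
      · exact ⟨⟨j, rfl⟩, by rw [Sym2.mem_iff]; left; rw [hj]⟩
      · refine ⟨⟨j - 1, by congr 1; ring⟩, ?_⟩
        rw [Sym2.mem_iff]; right; rw [hj]
  rw [hset]
  rw [Finset.card_insert_of_notMem, Finset.card_singleton]
  rw [Finset.mem_singleton]
  intro h
  rw [Sym2.eq_iff] at h
  rcases h with ⟨h1, h2⟩ | ⟨h1, h2⟩
  · have h3 : j + 1 = j := f.injective h2
    exact fin_add_one_ne (by omega) _ h3
  · have h3 : j + 1 = j - 1 := f.injective h2
    have h4 : j + 1 + 1 = j := by rw [h3]; ring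
    exact fin_add_two_ne hn _ h4

lemma master (hn : 2 ≤ n) (p : Equiv.Perm (Fin (n+1)) → Prop) [DecidablePred p]
    (u : Fin (n+1)) :
    ∑ x ∈ Finset.univ.erase u,
        #(Finset.univ.filter fun f : Equiv.Perm (Fin (n+1)) =>
            p f ∧ s(u,x) ∈ circuitEdges (n+1) f)
      = 2 * #(Finset.univ.filter p) := by
  have key : ∀ f : Equiv.Perm (Fin (n+1)),
      #((Finset.univ.erase u).filter fun x => s(u,x) ∈ circuitEdges (n+1) f) = 2 := by
    intro f
    rw [← degree_two hn f u]
    apply Finset.card_bij (fun x _ => s(u,x))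
    · intro x hx
      rw [mem_filter] at hx ⊢
      refine ⟨hx.2, ?_⟩
      rw [Sym2.mem_iff]; left; rfl
    · intro x hx y hy h
      rw [mem_filter, Finset.mem_erase] at hx hy
      rw [Sym2.eq_iff] at h
      rcases h with ⟨-, h⟩ | ⟨h, h'⟩
      · exact h
      · exact absurd h' hx.1.1
    · intro e he
      rw [mem_filter] at he
      obtain ⟨he1, he2⟩ := he
      have hne := not_isDiag_of_mem (by omega) he1
      have hv := Sym2.other_spec he2
      refine ⟨Sym2.Mem.other he2, ?_, hv⟩
      rw [mem_filter, Finset.mem_erase]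
      refine ⟨⟨?_, mem_univ _⟩, by rw [hv]; exact he1⟩
      intro h
      rw [h] at hv
      exact hne (by rw [← hv]; exact Sym2.mk_isDiag_iff.mpr rfl)
  calc ∑ x ∈ Finset.univ.erase u,
        #(Finset.univ.filter fun f : Equiv.Perm (Fin (n+1)) =>
            p f ∧ s(u,x) ∈ circuitEdges (n+1) f)
      = ∑ x ∈ Finset.univ.erase u, ∑ f : Equiv.Perm (Fin (n+1)),
          (if p f ∧ s(u,x) ∈ circuitEdges (n+1) f then 1 else 0) :=
        Finset.sum_congr rfl fun x _ => Finset.card_filter _ _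
    _ = ∑ f : Equiv.Perm (Fin (n+1)), ∑ x ∈ Finset.univ.erase u,
          (if p f ∧ s(u,x) ∈ circuitEdges (n+1) f then 1 else 0) := Finset.sum_comm
    _ = ∑ f : Equiv.Perm (Fin (n+1)), (if p f then 2 else 0) := by
        apply Finset.sum_congr rfl
        intro f _
        by_cases hp : p f
        · simp only [hp, true_and, if_true]
          rw [← key f, Finset.card_filter]
        · simp [hp]
    _ = 2 * #(Finset.univ.filter p) := by
        rw [Finset.card_filter, Finset.mul_sum]
        apply Finset.sum_congr rfl
        intro f _
        by_cases hp : p f <;> simp [hp]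

lemma cnt_eq_single (e : Sym2 (Fin (n+1))) :
    cnt n e e = #(Finset.univ.filter fun f : Equiv.Perm (Fin (n+1)) =>
      e ∈ circuitEdges (n+1) f) := by
  unfold cnt; congr 1; apply Finset.filter_congr; intro f _; exact and_self_iff

lemma cnt_diag_mul (hn : 2 ≤ n) {a b : Fin (n+1)} (hab : a ≠ b) :
    cnt n s(a,b) s(a,b) * n = 2 * (n+1).factorial := by
  have hM := master hn (fun _ => True) a
  have hterm : ∀ x ∈ Finset.univ.erase a,
      #(Finset.univ.filter fun f : Equiv.Perm (Fin (n+1)) =>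
          (fun _ => True) f ∧ s(a,x) ∈ circuitEdges (n+1) f) = cnt n s(a,b) s(a,b) := by
    intro x hx
    have hax : a ≠ x := fun h => (Finset.mem_erase.mp hx).1 h.symm
    obtain ⟨g, hga, hgx⟩ := exists_perm2 hax hab
    have hmap := cnt_map g s(a,x) s(a,x)
    rw [Sym2.map_pair_eq, hga, hgx] at hmap
    have hc : #(Finset.univ.filter fun f : Equiv.Perm (Fin (n+1)) =>
        (fun _ => True) f ∧ s(a,x) ∈ circuitEdges (n+1) f) = cnt n s(a,x) s(a,x) := by
      unfold cnt; congr 1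
      apply Finset.filter_congr; intro f _
      exact ⟨fun h => ⟨h.2, h.2⟩, fun h => ⟨trivial, h.1⟩⟩
    rw [hc]
    exact hmap.symm
  rw [Finset.sum_congr rfl hterm, Finset.sum_const, smul_eq_mul] at hM
  rw [Finset.card_erase_of_mem (mem_univ a), card_univ, Fintype.card_fin] at hM
  simp only [Finset.filter_true, card_univ, Fintype.card_perm, Fintype.card_fin] at hM
  rw [mul_comm]
  simpa using hM

lemma cnt_adj_aux (hn : 2 ≤ n) {a b c : Fin (n+1)} (hab : a ≠ b) (hac : a ≠ c) (hbc : b ≠ c) :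
    cnt n s(a,b) s(a,c) * (n - 1) = cnt n s(a,b) s(a,b) := by
  classical
  have hM := master hn (fun f => s(a,b) ∈ circuitEdges (n+1) f) a
  have hb : b ∈ Finset.univ.erase a := Finset.mem_erase.mpr ⟨hab.symm, mem_univ _⟩
  rw [← Finset.sum_erase_add _ _ hb] at hM
  have hterm : ∀ x ∈ (Finset.univ.erase a).erase b,
      #(Finset.univ.filter fun f : Equiv.Perm (Fin (n+1)) =>
          s(a,b) ∈ circuitEdges (n+1) f ∧ s(a,x) ∈ circuitEdges (n+1) f)
        = cnt n s(a,b) s(a,c) := by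
    intro x hx
    have hxb : x ≠ b := (Finset.mem_erase.mp hx).1
    have hax : a ≠ x := fun h => (Finset.mem_erase.mp (Finset.mem_erase.mp hx).2).1 h.symm
    obtain ⟨g, hga, hgb, hgx⟩ := exists_perm3 hab hax hxb.symm hab hac hbc
    have := cnt_map g s(a,b) s(a,x)
    rw [Sym2.map_pair_eq, Sym2.map_pair_eq, hga, hgb, hgx] at this
    exact this.symm
  rw [Finset.sum_congr rfl hterm, Finset.sum_const, smul_eq_mul] at hM
  rw [Finset.card_erase_of_mem hb, Finset.card_erase_of_mem (mem_univ a), card_univ,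
    Fintype.card_fin] at hM
  rw [← cnt_eq_single] at hM
  -- hM : (n + 1 - 1 - 1) * cnt(adj) + cnt(diag) = 2 * cnt(diag)
  have h1 : n + 1 - 1 - 1 = n - 1 := by omega
  rw [h1] at hM
  have hM' : cnt n s(a,b) s(a,c) * (n - 1) + cnt n s(a,b) s(a,b)
      = 2 * cnt n s(a,b) s(a,b) := by
    rw [mul_comm]
    exact hM
  omega

lemma cnt_disj_aux (hn : 3 ≤ n) {a b c d : Fin (n+1)} (hab : a ≠ b) (hac : a ≠ c) (had : a ≠ d)
    (hbc : b ≠ c) (hbd : b ≠ d) (hcd : c ≠ d) :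
    cnt n s(a,b) s(c,d) = 2 * cnt n s(a,b) s(a,c) := by
  classical
  have hM := master (by omega) (fun f => s(a,b) ∈ circuitEdges (n+1) f) c
  have ha : a ∈ Finset.univ.erase c := Finset.mem_erase.mpr ⟨hac, mem_univ _⟩
  rw [← Finset.sum_erase_add _ _ ha] at hM
  have hb : b ∈ (Finset.univ.erase c).erase a :=
    Finset.mem_erase.mpr ⟨hab.symm, Finset.mem_erase.mpr ⟨hbc, mem_univ _⟩⟩
  rw [← Finset.sum_erase_add _ _ hb] at hM
  have hterm : ∀ x ∈ ((Finset.univ.erase c).erase a).erase b,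
      #(Finset.univ.filter fun f : Equiv.Perm (Fin (n+1)) =>
          s(a,b) ∈ circuitEdges (n+1) f ∧ s(c,x) ∈ circuitEdges (n+1) f)
        = cnt n s(a,b) s(c,d) := by
    intro x hx
    have hxb : x ≠ b := (Finset.mem_erase.mp hx).1
    have hxa : x ≠ a := (Finset.mem_erase.mp (Finset.mem_erase.mp hx).2).1
    have hxc : x ≠ c :=
      (Finset.mem_erase.mp (Finset.mem_erase.mp (Finset.mem_erase.mp hx).2).2).1
    obtain ⟨g, hga, hgb, hgc, hgx⟩ :=
      exists_perm4 hab hac hxa.symm hbc hxb.symm hxc.symm hab hac had hbc hbd hcd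
    have := cnt_map g s(a,b) s(c,x)
    rw [Sym2.map_pair_eq, Sym2.map_pair_eq, hga, hgb, hgc, hgx] at this
    exact this.symm
  rw [Finset.sum_congr rfl hterm, Finset.sum_const, smul_eq_mul] at hM
  rw [Finset.card_erase_of_mem hb, Finset.card_erase_of_mem ha,
    Finset.card_erase_of_mem (mem_univ c), card_univ, Fintype.card_fin] at hM
  rw [← cnt_eq_single] at hM
  -- identify the two split-off terms with cnt s(a,b) s(a,c)
  have e1 : #(Finset.univ.filter fun f : Equiv.Perm (Fin (n+1)) =>
      s(a,b) ∈ circuitEdges (n+1) f ∧ s(c,a) ∈ circuitEdges (n+1) f)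
      = cnt n s(a,b) s(a,c) := by
    have hsw : s(c,a) = s(a,c) := Sym2.eq_swap
    rw [show #(Finset.univ.filter fun f : Equiv.Perm (Fin (n+1)) =>
      s(a,b) ∈ circuitEdges (n+1) f ∧ s(c,a) ∈ circuitEdges (n+1) f)
      = cnt n s(a,b) s(c,a) from rfl, hsw]
  have e2 : #(Finset.univ.filter fun f : Equiv.Perm (Fin (n+1)) =>
      s(a,b) ∈ circuitEdges (n+1) f ∧ s(c,b) ∈ circuitEdges (n+1) f)
      = cnt n s(a,b) s(a,c) := by
    obtain ⟨g, hga, hgb, hgc⟩ := exists_perm3 hab hac hbc hab.symm hbc hac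
    have h := cnt_map g s(a,b) s(c,b)
    rw [Sym2.map_pair_eq, Sym2.map_pair_eq, hga, hgb, hgc] at h
    rw [(Sym2.eq_swap : s(b,a) = s(a,b)), (Sym2.eq_swap : s(c,a) = s(a,c))] at h
    have hd : #(Finset.univ.filter fun f : Equiv.Perm (Fin (n+1)) =>
      s(a,b) ∈ circuitEdges (n+1) f ∧ s(c,b) ∈ circuitEdges (n+1) f)
      = cnt n s(a,b) s(c,b) := rfl
    rw [hd, ← h]
  rw [e1, e2] at hM
  have hadj := cnt_adj_aux (by omega) hab hac hbc
  -- hM : (n+1-1-1-1) * cnt(disj) + cnt(adj) + cnt(adj) = 2 * cnt(diag)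
  have h1 : n + 1 - 1 - 1 - 1 = n - 2 := by omega
  rw [h1] at hM
  -- substitute diag = (n-1) * adj
  rw [← hadj] at hM
  set β := cnt n s(a,b) s(a,c) with hβ
  set γ := cnt n s(a,b) s(c,d) with hγ
  -- hM : (n-2) * γ + β + β = 2 * (β * (n-1))
  obtain ⟨k, hk⟩ : ∃ k, n = k + 3 := ⟨n - 3, by omega⟩
  subst hk
  have h2 : k + 3 - 2 = k + 1 := by omega
  have h3 : k + 3 - 1 = k + 2 := by omega
  rw [h2, h3] at hM
  have h5 : 2 * (β * (k+2)) = (k+1) * (2*β) + β + β := by ring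
  rw [h5] at hM
  exact Nat.eq_of_mul_eq_mul_left (Nat.succ_pos k)
    (Nat.add_right_cancel (Nat.add_right_cancel hM))

lemma cnt_adj_mul (hn : 2 ≤ n) {a b c : Fin (n+1)} (hab : a ≠ b) (hac : a ≠ c) (hbc : b ≠ c) :
    cnt n s(a,b) s(a,c) * (n * (n - 1)) = 2 * (n+1).factorial := by
  rw [mul_comm n (n-1), ← mul_assoc, cnt_adj_aux hn hab hac hbc, cnt_diag_mul hn hab]

lemma cnt_disj_mul (hn : 3 ≤ n) {a b c d : Fin (n+1)} (hab : a ≠ b) (hac : a ≠ c) (had : a ≠ d)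
    (hbc : b ≠ c) (hbd : b ≠ d) (hcd : c ≠ d) :
    cnt n s(a,b) s(c,d) * (n * (n - 1)) = 4 * (n+1).factorial := by
  rw [cnt_disj_aux hn hab hac had hbc hbd hcd, mul_assoc,
    cnt_adj_mul (by omega) hab hac hbc]
  ring

lemma fullMoment_apply (hn : 2 ≤ n) (e e' : Edge (n+1)) :
    fullMoment (n+1) e e' = (cnt n e.val e'.val : ℝ) / (n+1).factorial := by
  classical
  have hsum : ∑ f : Equiv.Perm (Fin (n+1)),
      ((if e.val ∈ circuitEdges (n+1) f then (1:ℝ) else 0) *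
       (if e'.val ∈ circuitEdges (n+1) f then (1:ℝ) else 0))
      = (2*(n+1) : ℝ) * ∑ a ∈ HamCircuits (n+1),
          ((if e.val ∈ a then (1:ℝ) else 0) * (if e'.val ∈ a then (1:ℝ) else 0)) := by
    rw [Finset.sum_comp
      (fun a => (if e.val ∈ a then (1:ℝ) else 0) * (if e'.val ∈ a then (1:ℝ) else 0))
      (circuitEdges (n+1))]
    rw [Finset.mul_sum]
    unfold HamCircuits
    apply Finset.sum_congr rfl
    intro b hb
    obtain ⟨f₀, -, rfl⟩ := Finset.mem_image.mp hb
    rw [card_fiber hn f₀, nsmul_eq_mul]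
    push_cast
    ring
  have hcnt : ∑ f : Equiv.Perm (Fin (n+1)),
      ((if e.val ∈ circuitEdges (n+1) f then (1:ℝ) else 0) *
       (if e'.val ∈ circuitEdges (n+1) f then (1:ℝ) else 0))
      = (cnt n e.val e'.val : ℝ) := by
    unfold cnt
    rw [Finset.card_filter]
    push_cast
    apply Finset.sum_congr rfl
    intro f _
    by_cases h1 : e.val ∈ circuitEdges (n+1) f <;>
      by_cases h2 : e'.val ∈ circuitEdges (n+1) f <;> simp [h1, h2]
  unfold fullMoment
  rw [Matrix.smul_apply, Matrix.sum_apply]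
  simp only [outerMat, Matrix.of_apply, xvec]
  rw [show (n + 1 - 1) = n from rfl]
  rw [hcnt] at hsum
  have h2 : ∑ a ∈ HamCircuits (n+1),
      ((if e.val ∈ a then (1:ℝ) else 0) * (if e'.val ∈ a then (1:ℝ) else 0))
      = (cnt n e.val e'.val : ℝ) / (2*(n+1)) := by
    rw [hsum]
    rw [mul_comm, mul_div_assoc, div_self (by positivity : (2*((n:ℝ)+1)) ≠ 0), mul_one]
  rw [h2, smul_eq_mul, Nat.factorial_succ]
  have hfac : (n.factorial : ℝ) ≠ 0 := Nat.cast_ne_zero.mpr n.factorial_ne_zero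
  have hn1 : ((n:ℝ)+1) ≠ 0 := by positivity
  push_cast
  field_simp


end HamAux

open Classical in
/-- For `m ≥ 5`, the normalized moment matrix of the full design of all Hamiltonian
circuits, `(2/(m-1)!) Σ_a x(a) x(a)ᵀ`, equals `(2/(m-1))·I + (2/((m-1)(m-2)))·Q`:
its diagonal entries are `2/(m-1)`, entries for pairs of edges sharing exactly one vertex
are `2/((m-1)(m-2))`, and entries for vertex-disjoint pairs are `4/((m-1)(m-2))`. -/
theorem stmt4 (m : ℕ) (hm : 5 ≤ m) :
    fullMoment m = Matrix.of fun e e' : Edge m =>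
      if e = e' then 2 / ((m : ℝ) - 1)
      else if ∃ v, v ∈ e.val ∧ v ∈ e'.val then 2 / (((m : ℝ) - 1) * ((m : ℝ) - 2))
      else 4 / (((m : ℝ) - 1) * ((m : ℝ) - 2)) := by
  obtain ⟨n, rfl⟩ : ∃ n, m = n + 1 := ⟨m - 1, by omega⟩
  have hn : 4 ≤ n := by omega
  have hfac : ((n+1).factorial : ℝ) ≠ 0 := Nat.cast_ne_zero.mpr (n+1).factorial_ne_zero
  have hfacpos : (0:ℝ) < ((n+1).factorial : ℝ) := by
    exact_mod_cast (n+1).factorial_pos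
  have hnpos : (0:ℝ) < (n:ℝ) := by
    have : (0:ℕ) < n := by omega
    exact_mod_cast this
  have hm1 : ((n+1 : ℕ) : ℝ) - 1 = (n : ℝ) := by push_cast; ring
  have hm2 : ((n+1 : ℕ) : ℝ) - 2 = ((n - 1 : ℕ) : ℝ) := by
    rw [Nat.cast_sub (by omega)]
    push_cast; ring
  have hn1pos : (0:ℝ) < ((n - 1 : ℕ) : ℝ) := by
    have : (0:ℕ) < n - 1 := by omega
    exact_mod_cast this
  ext e e'
  rw [fullMoment_apply (by omega) e e', Matrix.of_apply]
  by_cases heq : e = e'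
  · rw [if_pos heq]
    subst heq
    obtain ⟨a, b, hab'⟩ : ∃ a b, e.val = s(a,b) := by
      induction e.val using Sym2.ind with
      | _ x y => exact ⟨x, y, rfl⟩
    have hab : a ≠ b := fun h => e.prop (by rw [hab']; exact Sym2.mk_isDiag_iff.mpr h)
    rw [hab', hm1, div_eq_div_iff hfac (ne_of_gt hnpos)]
    exact_mod_cast cnt_diag_mul (by omega) hab
  · rw [if_neg heq]
    by_cases hsh : ∃ v, v ∈ e.val ∧ v ∈ e'.val
    · rw [if_pos hsh]
      obtain ⟨v, hv, hv'⟩ := hsh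
      have hb := Sym2.other_spec hv
      have hc := Sym2.other_spec hv'
      set b := Sym2.Mem.other hv with hbdef
      set c := Sym2.Mem.other hv' with hcdef
      have hvb : v ≠ b := fun h => e.prop (by rw [← hb, ← h]; exact Sym2.mk_isDiag_iff.mpr rfl)
      have hvc : v ≠ c := fun h => e'.prop (by rw [← hc, ← h]; exact Sym2.mk_isDiag_iff.mpr rfl)
      have hbc : b ≠ c := by
        intro h
        apply heq
        apply Subtype.ext
        rw [← hb, ← hc, h]
      rw [hm1, hm2, ← hb, ← hc, div_eq_div_iff hfac (by positivity)]
      have := cnt_adj_mul (n := n) (by omega) hvb hvc hbc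
      exact_mod_cast this
    · rw [if_neg hsh]
      push_neg at hsh
      obtain ⟨a, b, hab'⟩ : ∃ a b, e.val = s(a,b) := by
        induction e.val using Sym2.ind with
        | _ x y => exact ⟨x, y, rfl⟩
      obtain ⟨c, d, hcd'⟩ : ∃ c d, e'.val = s(c,d) := by
        induction e'.val using Sym2.ind with
        | _ x y => exact ⟨x, y, rfl⟩
      have hab : a ≠ b := fun h => e.prop (by rw [hab']; exact Sym2.mk_isDiag_iff.mpr h)
      have hcd : c ≠ d := fun h => e'.prop (by rw [hcd']; exact Sym2.mk_isDiag_iff.mpr h)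
      have hna : a ∉ e'.val := hsh a (by rw [hab']; exact Sym2.mem_mk_left a b)
      have hnb : b ∉ e'.val := hsh b (by rw [hab']; exact Sym2.mem_mk_right a b)
      rw [hcd'] at hna hnb
      have hac : a ≠ c := fun h => hna (h ▸ Sym2.mem_mk_left c d)
      have had : a ≠ d := fun h => hna (h ▸ Sym2.mem_mk_right c d)
      have hbc : b ≠ c := fun h => hnb (h ▸ Sym2.mem_mk_left c d)
      have hbd : b ≠ d := fun h => hnb (h ▸ Sym2.mem_mk_right c d)
      rw [hm1, hm2, hab', hcd', div_eq_div_iff hfac (by positivity)]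
      have := cnt_disj_mul (n := n) (by omega) hab hac had hbc hbd hcd
      exact_mod_cast this
end

section
/- Nearest-neighbor guarantee under the triangle inequality: Let β* assign a nonnegative cost β*_{jk} to each edge of K_m satisfying β*_{ij} + β*_{ik} ≥ β*_{jk} for all triples of distinct vertices i,j,k. Let â be a Hamiltonian circuit produced by the nearest-neighbor heuristic (repeatedly moving from the current vertex to the nearest unvisited vertex, then returning to the start), and a* a minimum-cost Hamiltonian circuit. Then τ(â) ≤ (0.5⌈log₂ m⌉ + 0.5)·τ(a*), where τ(a) = Σ_{(j,k) ∈ a} β*_{jk}. -/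
open Finset

open Finset

private lemma rsl_telescope (D : ℕ → ℝ) (n : ℕ) (W : ℕ → ℕ) (hW : Monotone W) :
    ∑ a ∈ Finset.range n, ∑ k ∈ Finset.Ico (W a) (W (a+1)), D k
      = ∑ k ∈ Finset.Ico (W 0) (W n), D k := by
  induction n with
  | zero => simp
  | succ n ih =>
    rw [Finset.sum_range_succ, ih,
      Finset.sum_Ico_consecutive _ (hW (Nat.zero_le n)) (hW (Nat.le_succ n))]

private lemma rsl_count (t k : ℕ) (hk : t ≤ 2*k) (s : ℕ → ℝ)
    (hanti : ∀ i j : ℕ, i ≤ j → s j ≤ s i) (h0 : ∀ i, 0 ≤ s i)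
    (M : Fin t → ℕ) (hM : ∀ a, M a < t)
    (hc : ∀ j, (Finset.univ.filter (fun a => M a = j)).card ≤ 2) :
    2 * ∑ j ∈ Finset.Ico k t, s j ≤ ∑ a : Fin t, s (M a) := by
  rcases le_or_gt t k with h | h
  · rw [Finset.Ico_eq_empty (by omega)]
    simpa using Finset.sum_nonneg (fun a _ => h0 (M a))
  set c : ℕ → ℕ := fun j => (Finset.univ.filter (fun a => M a = j)).card with hcdef
  have hcle : ∀ j, (c j : ℝ) ≤ 2 := fun j => by exact_mod_cast hc j
  have hc0 : ∀ j, (0:ℝ) ≤ (c j : ℝ) := fun j => Nat.cast_nonneg _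
  have hfib : ∑ a : Fin t, s (M a) = ∑ j ∈ Finset.range t, (c j : ℝ) * s j := by
    rw [← Finset.sum_fiberwise_of_maps_to (t := Finset.range t)
      (fun a _ => Finset.mem_range.mpr (hM a)) (fun a => s (M a))]
    refine Finset.sum_congr rfl (fun j _ => ?_)
    rw [Finset.sum_congr rfl (fun a ha => by
      rw [(Finset.mem_filter.mp ha).2]), Finset.sum_const, nsmul_eq_mul]
  have hsumc : ∑ j ∈ Finset.range t, (c j : ℝ) = t := by
    have h1 := Finset.card_eq_sum_card_fiberwise (t := Finset.range t)
      (f := M) (s := Finset.univ) (fun a _ => Finset.mem_range.mpr (hM a))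
    simp only [Finset.card_univ, Fintype.card_fin] at h1
    exact_mod_cast (congrArg (Nat.cast : ℕ → ℝ) h1).symm
  have hsplit : ∑ j ∈ Finset.range t, (c j : ℝ) * s j
      = ∑ j ∈ Finset.Ico 0 k, (c j : ℝ) * s j + ∑ j ∈ Finset.Ico k t, (c j : ℝ) * s j := by
    rw [Finset.range_eq_Ico, ← Finset.sum_Ico_consecutive _ (Nat.zero_le k) (le_of_lt h)]
  have hsplit2 : (t:ℝ) = ∑ j ∈ Finset.Ico 0 k, (c j : ℝ) + ∑ j ∈ Finset.Ico k t, (c j : ℝ) := by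
    rw [← hsumc, Finset.range_eq_Ico, ← Finset.sum_Ico_consecutive _ (Nat.zero_le k) (le_of_lt h)]
  have key : ∑ j ∈ Finset.Ico k t, (2 - (c j : ℝ)) * s j
      ≤ ∑ j ∈ Finset.Ico 0 k, (c j : ℝ) * s j := by
    have step1 : ∑ j ∈ Finset.Ico k t, (2 - (c j : ℝ)) * s j
        ≤ (∑ j ∈ Finset.Ico k t, (2 - (c j : ℝ))) * s k := by
      rw [Finset.sum_mul]
      refine Finset.sum_le_sum (fun j hj => ?_)
      exact mul_le_mul_of_nonneg_left (hanti k j (Finset.mem_Ico.mp hj).1)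
        (by linarith [hcle j])
    have step2 : (∑ j ∈ Finset.Ico k t, (2 - (c j : ℝ))) * s k
        ≤ (∑ j ∈ Finset.Ico 0 k, (c j : ℝ)) * s k := by
      refine mul_le_mul_of_nonneg_right ?_ (h0 k)
      have hcard : ((Finset.Ico k t).card : ℝ) = (t : ℝ) - k := by
        rw [Nat.card_Ico]; push_cast [Nat.cast_sub (le_of_lt h)]; ring
      have : ∑ j ∈ Finset.Ico k t, (2 - (c j : ℝ))
          = 2 * ((t:ℝ) - k) - ∑ j ∈ Finset.Ico k t, (c j : ℝ) := by
        rw [Finset.sum_sub_distrib, Finset.sum_const, nsmul_eq_mul, hcard]; ring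
      rw [this]
      have ht2k : (t:ℝ) ≤ 2 * k := by exact_mod_cast hk
      linarith [hsplit2]
    have step3 : (∑ j ∈ Finset.Ico 0 k, (c j : ℝ)) * s k
        ≤ ∑ j ∈ Finset.Ico 0 k, (c j : ℝ) * s j := by
      rw [Finset.sum_mul]
      refine Finset.sum_le_sum (fun j hj => ?_)
      exact mul_le_mul_of_nonneg_left (hanti j k (le_of_lt (Finset.mem_Ico.mp hj).2)) (hc0 j)
    linarith
  rw [hfib, hsplit]
  have expand : ∑ j ∈ Finset.Ico k t, (2 - (c j : ℝ)) * s j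
      = 2 * ∑ j ∈ Finset.Ico k t, s j - ∑ j ∈ Finset.Ico k t, (c j : ℝ) * s j := by
    rw [Finset.mul_sum, ← Finset.sum_sub_distrib]
    exact Finset.sum_congr rfl (fun j _ => by ring)
  linarith

open Finset

private def rsl_G {m : ℕ} (hm : 2 ≤ m) (g : Fin m → Fin m) : ℕ → Fin m :=
  fun k => g ⟨k % m, Nat.mod_lt _ (by omega)⟩

private lemma rsl_G_period {m : ℕ} (hm : 2 ≤ m) (g : Fin m → Fin m) (k : ℕ) :
    rsl_G hm g (k + m) = rsl_G hm g k := by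
  simp [rsl_G, Nat.add_mod_right]

private lemma rsl_G_ne {m : ℕ} (hm : 2 ≤ m) (g : Fin m → Fin m)
    (hg : Function.Injective g) {a b : ℕ} (hab : a < b) (hba : b < a + m) :
    rsl_G hm g a ≠ rsl_G hm g b := by
  intro hEq
  simp only [rsl_G] at hEq
  have h2 : a % m = b % m := Fin.mk.inj_iff.mp (hg hEq)
  have h3 : m ∣ b - a := (Nat.modEq_iff_dvd' (le_of_lt hab)).mp h2
  have h4 : m ≤ b - a := Nat.le_of_dvd (by omega) h3
  omega

private lemma rsl_chain {m : ℕ} (hm : 2 ≤ m) (β : Fin m → Fin m → ℝ) (g : Fin m → Fin m)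
    (hg : Function.Injective g)
    (hsym : ∀ i j, β i j = β j i)
    (htri : ∀ i j k : Fin m, i ≠ j → j ≠ k → i ≠ k → β j k ≤ β i j + β i k) :
    ∀ b a : ℕ, a < b → b < a + m →
      β (rsl_G hm g a) (rsl_G hm g b)
        ≤ ∑ k ∈ Finset.Ico a b, β (rsl_G hm g k) (rsl_G hm g (k+1)) := by
  intro b
  induction b with
  | zero => omega
  | succ b ih =>
    intro a hab hba
    rcases Nat.lt_or_ge a b with hab' | hab'
    · have h1 := ih a hab' (by omega)
      have hne1 : rsl_G hm g b ≠ rsl_G hm g a := (rsl_G_ne hm g hg hab' (by omega)).symm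
      have hne2 : rsl_G hm g b ≠ rsl_G hm g (b+1) := rsl_G_ne hm g hg (by omega) (by omega)
      have hne3 : rsl_G hm g a ≠ rsl_G hm g (b+1) := rsl_G_ne hm g hg (by omega) hba
      have h2 := htri (rsl_G hm g b) (rsl_G hm g a) (rsl_G hm g (b+1)) hne1 hne3 hne2
      rw [Finset.sum_Ico_succ_top (le_of_lt hab')]
      rw [hsym (rsl_G hm g b) (rsl_G hm g a)] at h2
      linarith
    · have hab'' : a = b := by omega
      subst hab''
      rw [Finset.sum_Ico_succ_top (le_refl a), Finset.Ico_self, Finset.sum_empty, zero_add]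

private lemma rsl_window {m : ℕ} (hm : 2 ≤ m) (β : Fin m → Fin m → ℝ) (g : Fin m → Fin m)
    (c : ℕ) :
    ∑ k ∈ Finset.Ico c (c + m), β (rsl_G hm g k) (rsl_G hm g (k+1))
      = ∑ k ∈ Finset.range m, β (rsl_G hm g k) (rsl_G hm g (k+1)) := by
  induction c with
  | zero => rw [Finset.range_eq_Ico, Nat.zero_add]
  | succ c ih =>
    rw [← ih]
    have h1 : c + 1 + m = (c + m) + 1 := by omega
    rw [h1, Finset.sum_Ico_succ_top (by omega),
      Finset.sum_eq_sum_Ico_succ_bot (by omega : c < c + m)]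
    have h2 : c + m + 1 = (c + 1) + m := by omega
    rw [rsl_G_period, h2, rsl_G_period]
    ring
open Finset

private lemma rsl_cycle {m : ℕ} (hm : 2 ≤ m) (β : Fin m → Fin m → ℝ) (g : Fin m → Fin m)
    (hg : Function.Injective g)
    (hsym : ∀ i j, β i j = β j i)
    (htri : ∀ i j k : Fin m, i ≠ j → j ≠ k → i ≠ k → β j k ≤ β i j + β i k)
    (H : Finset ℕ) (t : ℕ) (hcard : H.card = t) (ht : 2 ≤ t)
    (hsub : ∀ x ∈ H, x < m) :
    ∑ a : Fin t, β (rsl_G hm g ((H.orderEmbOfFin hcard) a))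
        (rsl_G hm g ((H.orderEmbOfFin hcard) (finRotate t a)))
      ≤ ∑ k ∈ Finset.range m, β (rsl_G hm g k) (rsl_G hm g (k+1)) := by
  obtain ⟨n, rfl⟩ : ∃ n, t = n + 1 := ⟨t - 1, by omega⟩
  have hn : 1 ≤ n := by omega
  set w := H.orderEmbOfFin hcard with hw
  have hwm : ∀ a, w a < m := fun a => hsub _ (Finset.orderEmbOfFin_mem H hcard a)
  have hwmono : StrictMono w := w.strictMono
  set D : ℕ → ℝ := fun k => β (rsl_G hm g k) (rsl_G hm g (k+1)) with hD
  set W : ℕ → ℕ := fun j => if h : j < n + 1 then w ⟨j, h⟩ else w 0 + m with hW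
  have hWmono : Monotone W := by
    intro i j hij
    simp only [hW]
    split_ifs with h1 h2 h2
    · exact hwmono.monotone (by exact_mod_cast hij)
    · exact le_of_lt (lt_of_lt_of_le (hwm _) (by omega))
    · omega
    · exact le_refl _
  have key : ∀ a : Fin (n+1), β (rsl_G hm g (w a)) (rsl_G hm g (w (finRotate (n+1) a)))
      ≤ ∑ k ∈ Finset.Ico (W a.val) (W (a.val + 1)), D k := by
    intro a
    rcases Nat.lt_or_ge (a.val + 1) (n + 1) with hlt | hge
    · have hrot : (w (finRotate (n+1) a)) = w ⟨a.val + 1, hlt⟩ := by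
        congr 1
        rw [finRotate_succ_apply]
        apply Fin.ext
        simp [Fin.add_def]
        omega
      have hWa : W a.val = w a := by simp only [hW]; rw [dif_pos a.isLt]
      have hWa1 : W (a.val + 1) = w ⟨a.val + 1, hlt⟩ := by simp only [hW]; rw [dif_pos hlt]
      rw [hrot, hWa, hWa1]
      exact rsl_chain hm β g hg hsym htri _ _
        (hwmono (by exact Fin.mk_lt_mk.mpr (by omega)))
        (lt_of_lt_of_le (hwm _) (by omega))
    · -- a = last n
      have ha : a = Fin.last n := Fin.ext (by simp [Fin.last]; omega)
      have hrot : finRotate (n+1) a = 0 := by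
        rw [finRotate_succ_apply, ha]; exact Fin.last_add_one n
      have hWa : W a.val = w a := by simp only [hW]; rw [dif_pos a.isLt]
      have hWa1 : W (a.val + 1) = w 0 + m := by
        simp only [hW]; rw [dif_neg (by omega)]
      rw [hrot, hWa, hWa1, ← rsl_G_period hm g (w 0)]
      refine rsl_chain hm β g hg hsym htri _ _ ?_ ?_
      · exact lt_of_lt_of_le (hwm a) (by omega)
      · have h5 : w 0 < w a := hwmono (by
          rw [ha]; exact Fin.lt_def.mpr (by simp [Fin.last]; omega))
        omega
  calc ∑ a : Fin (n+1), β (rsl_G hm g (w a)) (rsl_G hm g (w (finRotate (n+1) a)))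
      ≤ ∑ a : Fin (n+1), ∑ k ∈ Finset.Ico (W a.val) (W (a.val + 1)), D k :=
        Finset.sum_le_sum (fun a _ => key a)
    _ = ∑ j ∈ Finset.range (n+1), ∑ k ∈ Finset.Ico (W j) (W (j + 1)), D k := by
        exact Fin.sum_univ_eq_sum_range (fun j => ∑ k ∈ Finset.Ico (W j) (W (j + 1)), D k) (n+1)
    _ = ∑ k ∈ Finset.Ico (W 0) (W (n+1)), D k := rsl_telescope D (n+1) W hWmono
    _ = ∑ k ∈ Finset.range m, D k := by
        have hW0 : W 0 = w 0 := by
          simp only [hW]; rw [dif_pos (by omega)]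
          exact congrArg w (Fin.ext (by simp))
        have hWn : W (n+1) = w 0 + m := by simp only [hW]; rw [dif_neg (by omega)]
        rw [hW0, hWn]
        exact rsl_window hm β g (w 0)
open Finset

private lemma rsl_rot_ne {n : ℕ} (hn : 2 ≤ n) (a : Fin n) : finRotate n a ≠ a := by
  obtain ⟨k, rfl⟩ : ∃ k, n = k + 1 := ⟨n - 1, by omega⟩
  rw [finRotate_succ_apply]
  intro h
  have h0 := congrArg Fin.val h
  rw [Fin.add_def] at h0
  have h1 : (1 : Fin (k+1)).val = 1 := by
    simp [Fin.val_one']; omega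
  rw [h1] at h0
  simp only [Fin.val_mk] at h0
  have ha := a.isLt
  rcases Nat.lt_or_ge (a.val + 1) (k+1) with h2 | h2
  · rw [Nat.mod_eq_of_lt h2] at h0; omega
  · have h3 : a.val = k := by omega
    rw [h3] at h0
    simp [Nat.mod_self] at h0
    omega

private lemma rsl_opt_eq {m : ℕ} (hm : 2 ≤ m) (β : Fin m → Fin m → ℝ) (g : Fin m → Fin m) :
    ∑ k ∈ Finset.range m, β (rsl_G hm g k) (rsl_G hm g (k+1))
      = ∑ i : Fin m, β (g i) (g (finRotate m i)) := by
  rw [← Fin.sum_univ_eq_sum_range (fun k => β (rsl_G hm g k) (rsl_G hm g (k+1))) m]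
  refine Finset.sum_congr rfl (fun i _ => ?_)
  obtain ⟨n, rfl⟩ : ∃ n, m = n + 1 := ⟨m - 1, by omega⟩
  have e1 : rsl_G hm g i.val = g i := by
    simp only [rsl_G]
    exact congrArg g (Fin.ext (by simp [Nat.mod_eq_of_lt i.isLt]))
  have e2 : rsl_G hm g (i.val + 1) = g (finRotate (n+1) i) := by
    simp only [rsl_G]
    refine congrArg g (Fin.ext ?_)
    rw [finRotate_succ_apply, Fin.add_def]
    have h1 : (1 : Fin (n+1)).val = 1 := by simp [Fin.val_one']; omega
    rw [h1]
  rw [e1, e2]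

/-- Nearest-neighbor guarantee under the triangle inequality (Rosenkrantz–Stearns–Lewis):
for symmetric nonnegative edge costs `β` on `K_m` satisfying the triangle inequality, if
`f` lists the vertices in the order produced by the nearest-neighbor heuristic (at each
step the next vertex is a nearest unvisited vertex, and the circuit closes back to the
start) and `g` is a minimum-cost Hamiltonian circuit, then
`τ(f) ≤ (0.5⌈log₂ m⌉ + 0.5)·τ(g)`, where `τ(h) = Σ_i β(h i, h (i+1))` (cyclically). -/
theorem stmt16 (m : ℕ) (hm : 3 ≤ m) (β : Fin m → Fin m → ℝ)
    (hsym : ∀ i j, β i j = β j i)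
    (hnonneg : ∀ i j, 0 ≤ β i j)
    (htri : ∀ i j k : Fin m, i ≠ j → j ≠ k → i ≠ k → β j k ≤ β i j + β i k)
    (f g : Fin m → Fin m)
    (hf : Function.Bijective f) (hg : Function.Bijective g)
    (hNN : ∀ i j : Fin m, (i : ℕ) + 1 < m → i < j →
      β (f i) (f (finRotate m i)) ≤ β (f i) (f j))
    (hopt : ∀ h : Fin m → Fin m, Function.Bijective h →
      ∑ i : Fin m, β (g i) (g (finRotate m i)) ≤ ∑ i : Fin m, β (h i) (h (finRotate m i))) :
    ∑ i : Fin m, β (f i) (f (finRotate m i)) ≤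
      (0.5 * (Nat.clog 2 m : ℝ) + 0.5) * ∑ i : Fin m, β (g i) (g (finRotate m i)) := by
  have hm2 : 2 ≤ m := by omega
  set OPT := ∑ i : Fin m, β (g i) (g (finRotate m i)) with hOPT
  have hOPTnn : 0 ≤ OPT := Finset.sum_nonneg (fun i _ => hnonneg _ _)
  set φ := Equiv.ofBijective f hf with hφ
  set ψ := Equiv.ofBijective g hg with hψ
  have hfφ : ∀ v, f (φ.symm v) = v := fun v => φ.apply_symm_apply v
  have hgψ : ∀ v, g (ψ.symm v) = v := fun v => ψ.apply_symm_apply v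
  set L : Fin m → ℝ := fun v => β v (f (finRotate m (φ.symm v))) with hL
  have hsumL : ∑ v : Fin m, L v = ∑ i : Fin m, β (f i) (f (finRotate m i)) := by
    rw [← Equiv.sum_comp φ L]
    refine Finset.sum_congr rfl (fun i _ => ?_)
    simp only [hL, Equiv.symm_apply_apply]
    rfl
  -- min property
  have hmin : ∀ u v : Fin m, u ≠ v → L u ≤ β u v ∨ L v ≤ β u v := by
    intro u v huv
    have hpq : φ.symm u ≠ φ.symm v := fun h => huv (by rw [← hfφ u, ← hfφ v, h])
    rcases lt_or_gt_of_ne hpq with h | h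
    · left
      have h1 := hNN (φ.symm u) (φ.symm v)
        (by have h2 : ((φ.symm u : Fin m) : ℕ) < ((φ.symm v : Fin m) : ℕ) := h
            have := (φ.symm v).isLt; omega) h
      rw [hfφ, hfφ] at h1
      exact h1
    · right
      have h1 := hNN (φ.symm v) (φ.symm u)
        (by have h2 : ((φ.symm v : Fin m) : ℕ) < ((φ.symm u : Fin m) : ℕ) := h
            have := (φ.symm u).isLt; omega) h
      rw [hfφ, hfφ] at h1
      rw [hsym u v]
      exact h1
  -- pair bound via optimal tour
  have hpairpos : ∀ i j : ℕ, i < j → j < m →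
      β (rsl_G hm2 g i) (rsl_G hm2 g j) + β (rsl_G hm2 g j) (rsl_G hm2 g i) ≤ OPT := by
    intro i j hij hjm
    have h1 := rsl_chain hm2 β g hg.injective hsym htri j i hij (by omega)
    have h2 := rsl_chain hm2 β g hg.injective hsym htri (i + m) j (by omega) (by omega)
    rw [rsl_G_period hm2 g i] at h2
    have h3 := Finset.sum_Ico_consecutive
      (fun k => β (rsl_G hm2 g k) (rsl_G hm2 g (k+1))) (le_of_lt hij) (by omega : j ≤ i + m)
    have h4 := rsl_window hm2 β g i
    have h5 := rsl_opt_eq hm2 β g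
    have h6 : i + m = i + m := rfl
    calc β (rsl_G hm2 g i) (rsl_G hm2 g j) + β (rsl_G hm2 g j) (rsl_G hm2 g i)
        ≤ (∑ k ∈ Finset.Ico i j, β (rsl_G hm2 g k) (rsl_G hm2 g (k+1)))
          + ∑ k ∈ Finset.Ico j (i+m), β (rsl_G hm2 g k) (rsl_G hm2 g (k+1)) := by
          exact add_le_add h1 h2
      _ = ∑ k ∈ Finset.Ico i (i+m), β (rsl_G hm2 g k) (rsl_G hm2 g (k+1)) := h3
      _ = OPT := by rw [h4, h5]
  have hpair : ∀ u v : Fin m, u ≠ v → 2 * β u v ≤ OPT := by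
    intro u v huv
    have hGu : rsl_G hm2 g ((ψ.symm u : Fin m) : ℕ) = u := by
      simp only [rsl_G]
      rw [show (⟨((ψ.symm u : Fin m) : ℕ) % m, _⟩ : Fin m) = ψ.symm u from
        Fin.ext (by simp [Nat.mod_eq_of_lt (ψ.symm u).isLt])]
      exact hgψ u
    have hGv : rsl_G hm2 g ((ψ.symm v : Fin m) : ℕ) = v := by
      simp only [rsl_G]
      rw [show (⟨((ψ.symm v : Fin m) : ℕ) % m, _⟩ : Fin m) = ψ.symm v from
        Fin.ext (by simp [Nat.mod_eq_of_lt (ψ.symm v).isLt])]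
      exact hgψ v
    have hne : ((ψ.symm u : Fin m) : ℕ) ≠ ((ψ.symm v : Fin m) : ℕ) := by
      intro h
      exact huv (by rw [← hgψ u, ← hgψ v, Fin.ext h])
    rcases Nat.lt_or_ge ((ψ.symm u : Fin m) : ℕ) ((ψ.symm v : Fin m) : ℕ) with h | h
    · have := hpairpos _ _ h (ψ.symm v).isLt
      rw [hGu, hGv, hsym v u] at this
      linarith
    · have h' : ((ψ.symm v : Fin m) : ℕ) < ((ψ.symm u : Fin m) : ℕ) := by omega
      have := hpairpos _ _ h' (ψ.symm u).isLt
      rw [hGu, hGv, hsym v u] at this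
      linarith
  have hLhalf : ∀ v : Fin m, L v ≤ OPT / 2 := by
    intro v
    have hne : v ≠ f (finRotate m (φ.symm v)) := by
      intro h
      have h2 : f (φ.symm v) = f (finRotate m (φ.symm v)) := by rw [hfφ]; exact h
      have h3 := hf.injective h2
      exact rsl_rot_ne hm2 (φ.symm v) h3.symm
    have := hpair v _ hne
    simp only [hL]
    linarith
  -- sorting
  set σ : Equiv.Perm (Fin m) := Tuple.sort (fun i => - L i) with hσ
  have hsort : Monotone ((fun i => - L i) ∘ ⇑σ) := Tuple.monotone_sort _
  set s : ℕ → ℝ := fun j => if h : j < m then L (σ ⟨j, h⟩) else 0 with hs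
  have hLnn : ∀ v, 0 ≤ L v := fun v => hnonneg _ _
  have hs0 : ∀ j, 0 ≤ s j := by
    intro j
    by_cases h : j < m
    · simp only [hs, dif_pos h]; exact hLnn _
    · simp only [hs, dif_neg h]; exact le_refl 0
  have hanti : ∀ i j : ℕ, i ≤ j → s j ≤ s i := by
    intro i j hij
    by_cases hj : j < m
    · have hi : i < m := by omega
      simp only [hs, dif_pos hi, dif_pos hj]
      have h1 := hsort (show (⟨i, hi⟩ : Fin m) ≤ ⟨j, hj⟩ from hij)
      simpa using h1
    · simp only [hs, dif_neg hj]
      exact hs0 i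
  have hsum_s : ∑ j ∈ Finset.range m, s j = ∑ v : Fin m, L v := by
    rw [← Fin.sum_univ_eq_sum_range s m]
    rw [← Equiv.sum_comp σ L]
    refine Finset.sum_congr rfl (fun i _ => ?_)
    simp only [hs, dif_pos i.isLt, Fin.eta]
  have hrank : ∀ v : Fin m, s ((σ.symm v : Fin m) : ℕ) = L v := by
    intro v
    simp only [hs, dif_pos (σ.symm v).isLt, Fin.eta, Equiv.apply_symm_apply]
  -- block lemma
  have hblock : ∀ k : ℕ, 1 ≤ k → k < m →
      2 * ∑ j ∈ Finset.Ico k (min (2*k) m), s j ≤ OPT := by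
    intro k hk1 hkm
    set N := min (2*k) m with hN
    have hN2 : 2 ≤ N := by omega
    have hNm : N ≤ m := min_le_right _ _
    set V : Finset (Fin m) := Finset.univ.filter (fun v => ((σ.symm v : Fin m) : ℕ) < N)
      with hV
    have hfilt : (Finset.univ.filter (fun i : Fin m => (i : ℕ) < N)).card = N := by
      have heq : (Finset.univ.filter (fun i : Fin m => (i : ℕ) < N)).card
          = (Finset.univ : Finset (Fin N)).card := by
        refine Finset.card_bij' (fun i hi => (⟨(i : ℕ), (Finset.mem_filter.mp hi).2⟩ : Fin N))
          (fun j _ => (⟨(j : ℕ), by omega⟩ : Fin m)) ?_ ?_ ?_ ?_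
        · intro a ha; exact Finset.mem_univ _
        · intro a ha
          refine Finset.mem_filter.mpr ⟨Finset.mem_univ _, a.isLt⟩
        · intro a ha; exact Fin.ext rfl
        · intro a ha; exact Fin.ext rfl
      simpa using heq
    have hVcard : V.card = N := by
      have himg : V = Finset.image (⇑σ) (Finset.univ.filter (fun i : Fin m => (i : ℕ) < N)) := by
        ext v
        constructor
        · intro hv
          have h2 := (Finset.mem_filter.mp hv).2
          exact Finset.mem_image.mpr ⟨σ.symm v,
            Finset.mem_filter.mpr ⟨Finset.mem_univ _, by simpa using h2⟩, by simp⟩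
        · intro hv
          obtain ⟨i, hi, rfl⟩ := Finset.mem_image.mp hv
          refine Finset.mem_filter.mpr ⟨Finset.mem_univ _, ?_⟩
          simpa using (Finset.mem_filter.mp hi).2
      rw [himg, Finset.card_image_of_injective _ σ.injective, hfilt]
    set Hs : Finset ℕ := V.image (fun v => ((ψ.symm v : Fin m) : ℕ)) with hHs
    have hinjψ : Function.Injective (fun v : Fin m => ((ψ.symm v : Fin m) : ℕ)) := by
      intro a b h
      have := Fin.ext (h : ((ψ.symm a : Fin m) : ℕ) = ((ψ.symm b : Fin m) : ℕ))
      exact ψ.symm.injective this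
    have hHcard : Hs.card = N := by
      rw [hHs, Finset.card_image_of_injective _ hinjψ, hVcard]
    have hHsub : ∀ x ∈ Hs, x < m := by
      intro x hx
      obtain ⟨v, _, rfl⟩ := Finset.mem_image.mp hx
      exact (ψ.symm v).isLt
    set w := Hs.orderEmbOfFin hHcard with hw
    set u : Fin N → Fin m := fun a => rsl_G hm2 g (w a) with hu
    have hwm : ∀ a, w a < m := fun a => hHsub _ (Finset.orderEmbOfFin_mem Hs hHcard a)
    have huV : ∀ a, u a ∈ V := by
      intro a
      obtain ⟨v, hv, hveq⟩ := Finset.mem_image.mp (Finset.orderEmbOfFin_mem Hs hHcard a)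
      have : u a = v := by
        simp only [hu, rsl_G]
        rw [show (⟨(w a) % m, _⟩ : Fin m) = ψ.symm v from
          Fin.ext (by rw [hveq]; exact Nat.mod_eq_of_lt (hwm a))]
        exact hgψ v
      rw [this]; exact hv
    have huinj : Function.Injective u := by
      intro a b h
      simp only [hu, rsl_G] at h
      have h2 := hg.injective h
      have h3 : (w a) % m = (w b) % m := congrArg Fin.val h2
      rw [Nat.mod_eq_of_lt (hwm a), Nat.mod_eq_of_lt (hwm b)] at h3
      exact w.injective h3
    set rk : Fin m → ℕ := fun v => ((σ.symm v : Fin m) : ℕ) with hrk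
    set M : Fin N → ℕ := fun a => max (rk (u a)) (rk (u (finRotate N a))) with hM
    have hrkV : ∀ a : Fin N, rk (u a) < N := by
      intro a
      have := Finset.mem_filter.mp (huV a)
      exact this.2
    have hMlt : ∀ a, M a < N := by
      intro a
      simp only [hM, max_lt_iff]
      exact ⟨hrkV a, hrkV _⟩
    have hrkinj : Function.Injective (fun a : Fin N => rk (u a)) := by
      intro a b h
      exact huinj (σ.symm.injective (Fin.ext h))
    have hcount : ∀ j, (Finset.univ.filter (fun a : Fin N => M a = j)).card ≤ 2 := by
      intro j
      have hsubun : Finset.univ.filter (fun a : Fin N => M a = j)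
          ⊆ (Finset.univ.filter (fun a : Fin N => rk (u a) = j))
            ∪ (Finset.univ.filter (fun a : Fin N => rk (u (finRotate N a)) = j)) := by
        intro a ha
        have h1 := (Finset.mem_filter.mp ha).2
        simp only [hM] at h1
        rcases max_choice (rk (u a)) (rk (u (finRotate N a))) with h2 | h2 <;>
          rw [h2] at h1
        · exact Finset.mem_union_left _ (Finset.mem_filter.mpr ⟨Finset.mem_univ _, h1⟩)
        · exact Finset.mem_union_right _ (Finset.mem_filter.mpr ⟨Finset.mem_univ _, h1⟩)
      have hc1 : (Finset.univ.filter (fun a : Fin N => rk (u a) = j)).card ≤ 1 := by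
        refine Finset.card_le_one.mpr (fun a ha b hb => ?_)
        have h1 := (Finset.mem_filter.mp ha).2
        have h2 := (Finset.mem_filter.mp hb).2
        exact hrkinj (h1.trans h2.symm)
      have hc2 : (Finset.univ.filter
          (fun a : Fin N => rk (u (finRotate N a)) = j)).card ≤ 1 := by
        refine Finset.card_le_one.mpr (fun a ha b hb => ?_)
        have h1 := (Finset.mem_filter.mp ha).2
        have h2 := (Finset.mem_filter.mp hb).2
        exact (finRotate N).injective (hrkinj (h1.trans h2.symm))
      calc (Finset.univ.filter (fun a : Fin N => M a = j)).card
          ≤ _ := Finset.card_le_card hsubun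
        _ ≤ _ := Finset.card_union_le _ _
        _ ≤ 2 := by omega
    have h1 : ∀ a : Fin N, s (M a) ≤ β (u a) (u (finRotate N a)) := by
      intro a
      have hne : u a ≠ u (finRotate N a) :=
        fun h => rsl_rot_ne hN2 a (huinj h.symm)
      rcases hmin (u a) (u (finRotate N a)) hne with h2 | h2
      · calc s (M a) ≤ s (rk (u a)) := hanti _ _ (le_max_left _ _)
          _ = L (u a) := hrank _
          _ ≤ _ := h2
      · calc s (M a) ≤ s (rk (u (finRotate N a))) := hanti _ _ (le_max_right _ _)
          _ = L (u (finRotate N a)) := hrank _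
          _ ≤ _ := h2
    have h2 : ∑ a : Fin N, β (u a) (u (finRotate N a)) ≤ OPT := by
      have := rsl_cycle hm2 β g hg.injective hsym htri Hs N hHcard hN2 hHsub
      rw [rsl_opt_eq hm2 β g] at this
      exact this
    have h3 := rsl_count N k (by omega) s hanti hs0 M hMlt hcount
    have h4 : ∑ a : Fin N, s (M a) ≤ ∑ a : Fin N, β (u a) (u (finRotate N a)) :=
      Finset.sum_le_sum (fun a _ => h1 a)
    linarith
  -- dyadic assembly
  set R := Nat.clog 2 m with hR
  have hblocks : ∑ j ∈ Finset.Ico 1 m, s j ≤ R * (OPT / 2) := by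
    have hone : ∀ r : ℕ,
        ∑ j ∈ Finset.Ico (min (2^r) m) (min (2^(r+1)) m), s j ≤ OPT / 2 := by
      intro r
      rcases Nat.lt_or_ge (2^r) m with h | h
      · rw [min_eq_left (le_of_lt h)]
        have hb := hblock (2^r) (Nat.one_le_two_pow) h
        have he : min (2^(r+1)) m = min (2 * 2^r) m := by
          rw [pow_succ, Nat.mul_comm]
        rw [he]
        linarith
      · rw [min_eq_right h, min_eq_right (le_trans h (Nat.pow_le_pow_right (by omega) (by omega))),
          Finset.Ico_self, Finset.sum_empty]
        linarith
    have hWmono : Monotone (fun r : ℕ => min (2^r) m) :=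
      fun a b hab => min_le_min (Nat.pow_le_pow_right (by omega) hab) (le_refl m)
    have htel := rsl_telescope s R (fun r => min (2^r) m) hWmono
    beta_reduce at htel
    have hmin1 : min (2^(0:ℕ)) m = 1 := by
      have h20 : (2:ℕ)^(0:ℕ) = 1 := pow_zero 2
      omega
    have hminR : min (2^R) m = m := min_eq_right (Nat.le_pow_clog (by omega) m)
    rw [hmin1, hminR] at htel
    rw [← htel]
    calc ∑ r ∈ Finset.range R, ∑ j ∈ Finset.Ico (min (2^r) m) (min (2^(r+1)) m), s j
        ≤ ∑ r ∈ Finset.range R, OPT / 2 := Finset.sum_le_sum (fun r _ => hone r)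
      _ = R * (OPT / 2) := by rw [Finset.sum_const, Finset.card_range, nsmul_eq_mul]
  have hs0half : s 0 ≤ OPT / 2 := by
    have h0m : 0 < m := by omega
    simp only [hs, dif_pos h0m]
    exact hLhalf _
  have hfinal : ∑ i : Fin m, β (f i) (f (finRotate m i)) ≤ OPT / 2 + R * (OPT / 2) := by
    rw [← hsumL, ← hsum_s, Finset.range_eq_Ico,
      Finset.sum_eq_sum_Ico_succ_bot (by omega : 0 < m) s]
    have := hblocks
    linarith
  have hcast : (0.5 * (R : ℝ) + 0.5) * OPT = OPT / 2 + R * (OPT / 2) := by ring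
  rw [hcast]
  exact hfinal
end
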